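/- arXiv:0706.0460 — 3 statements merged into one kernel-verified Lean document; each statement's English description precedes it below -/
import Mathlib

section
/- R is a free module over ℂ[t_1,…,t_n], and the canonical classes {p_w : w ∈ S_n} form a ℂ[t_1,…,t_n]-module basis of R. -/
/-!
The canonical classes are triangular with respect to length: `p_w(v) = 0` for `v ≠ w` with
`ℓ(v) ≤ ℓ(w)`, since such a `v` is not above `w` in Bruhat order, while `p_w(w) ≠ 0`; this gives
linear independence. For spanning, take `p ∈ R` and `v` of minimal length with `p(v) ≠ 0`. For
each `i < j` with `ℓ((i j)v) < ℓ(v)` we have `p((i j)v) = 0`, so the GKM condition makes `p(v)`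
divisible by `tᵢ − tⱼ`. These linear forms are pairwise non-associated primes, hence
`p_v(v) ∣ p(v)`, and subtracting the multiple `(p(v) / p_v(v)) p_v` of `p_v` kills `p` at `v`
without creating support of length `≤ ℓ(v)`.
-/

open MvPolynomial Equiv Finset

noncomputable section

/-- The polynomial ring ℂ[t₁,…,tₙ]. -/
abbrev Pol (n : ℕ) : Type := MvPolynomial (Fin n) ℂ

/-- The action of a permutation `w` on polynomials by the substitution `tᵢ ↦ t_{w(i)}`. -/
def pact {n : ℕ} (w : Perm (Fin n)) (f : Pol n) : Pol n := rename ⇑w f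

/-- The GKM condition defining `R ⊆ ∏_{v ∈ Sₙ} ℂ[t₁,…,tₙ]`: for every `v` and every
transposition `(i j)` with `i < j`, the difference `p(v) − p((i j)v)` is divisible by
`tᵢ − tⱼ`. -/
def GKM (n : ℕ) (p : Perm (Fin n) → Pol n) : Prop :=
  ∀ (v : Perm (Fin n)) (i j : Fin n), i < j →
    (X i - X j : Pol n) ∣ (p v - p (Equiv.swap i j * v))

/-- The length of a permutation: its number of inversions. -/
def len {n : ℕ} (w : Perm (Fin n)) : ℕ :=
  (Finset.univ.filter fun q : Fin n × Fin n => q.1 < q.2 ∧ w q.2 < w q.1).card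

/-- Bruhat order: the partial order generated by `u < (i j) u` whenever `ℓ(u) < ℓ((i j)u)`. -/
def bruhatLE {n : ℕ} : Perm (Fin n) → Perm (Fin n) → Prop :=
  Relation.ReflTransGen
    (fun u v => (∃ i j : Fin n, i < j ∧ v = Equiv.swap i j * u) ∧ len u < len v)

/-- `p` is the canonical class (equivariant Schubert class) of `w`:
(i) each component is homogeneous of degree `ℓ(w)`; (ii) `p(v) = 0` unless `v ≥ w` in
Bruhat order; (iii) `p(w) = ∏ (tᵢ − tⱼ)` over pairs `i < j` with `ℓ((i j)w) < ℓ(w)`;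
and `p` satisfies the GKM conditions. -/
def IsCanonical {n : ℕ} (w : Perm (Fin n)) (p : Perm (Fin n) → Pol n) : Prop :=
  GKM n p ∧
  (∀ v, (p v).IsHomogeneous (len w)) ∧
  (∀ v, ¬ bruhatLE w v → p v = 0) ∧
  p w = ∏ q ∈ Finset.univ.filter
      (fun q : Fin n × Fin n => q.1 < q.2 ∧ len (Equiv.swap q.1 q.2 * w) < len w),
      (X q.1 - X q.2 : Pol n)

/-- The simple transposition `sᵢ = (i, i+1)`. -/
def sT (n i : ℕ) (h : i + 1 < n) : Perm (Fin n) :=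
  Equiv.swap ⟨i, Nat.lt_of_succ_lt h⟩ ⟨i + 1, h⟩

/-- The dot (left) action: `(w·p)(v) = w(p(w⁻¹ v))`. -/
def dot {n : ℕ} (w : Perm (Fin n)) (p : Perm (Fin n) → Pol n) : Perm (Fin n) → Pol n :=
  fun v => pact w (p (w⁻¹ * v))

/-- The star (right) action: `(p * w)(v) = p(vw)`. -/
def starAct {n : ℕ} (p : Perm (Fin n) → Pol n) (w : Perm (Fin n)) :
    Perm (Fin n) → Pol n :=
  fun v => p (v * w)

/-- `R` as a `ℂ[t₁,…,tₙ]`-submodule of the product. -/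
def gkmSubmodule (n : ℕ) : Submodule (Pol n) (Perm (Fin n) → Pol n) where
  carrier := {p | GKM n p}
  add_mem' := by
    intro a b ha hb v i j hij
    have h := dvd_add (ha v i j hij) (hb v i j hij)
    simpa [Pi.add_apply, add_sub_add_comm] using h
  zero_mem' := by
    intro v i j hij
    simp
  smul_mem' := by
    intro c p hp v i j hij
    have h := (hp v i j hij).mul_left c
    simpa [Pi.smul_apply, smul_eq_mul, mul_sub] using h

/-- The maximal ideal `𝔪 = (t₁,…,tₙ) ⊆ ℂ[t₁,…,tₙ]`. -/
def mIdeal (n : ℕ) : Ideal (Pol n) := Ideal.span (Set.range (X : Fin n → Pol n))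

/-- The submodule `𝔪R`: finite sums of products `c • p` with `c ∈ 𝔪` and `p ∈ R`. -/
def mR (n : ℕ) : Submodule (Pol n) (Perm (Fin n) → Pol n) :=
  Submodule.span (Pol n) {q | ∃ c ∈ mIdeal n, ∃ p, GKM n p ∧ q = c • p}

namespace MvPolynomial

variable {σ R : Type*} [CommRing R]

theorem prime_X_sub_X [IsDomain R] {i j : σ} (h : i ≠ j) :
    Prime (X i - X j : MvPolynomial σ R) := by
  classical
  -- the shear `X i ↦ X i - X j` is an automorphism carrying the prime `X i` to `X i - X j`
  let shear : MvPolynomial σ R ≃ₐ[R] MvPolynomial σ R :=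
    AlgEquiv.ofAlgHom (aeval (Function.update X i (X i - X j)))
      (aeval (Function.update X i (X i + X j)))
      (by ext k; by_cases hk : k = i <;> simp [hk, h.symm])
      (by ext k; by_cases hk : k = i <;> simp [hk, h.symm])
  have hshear : shear (X i) = X i - X j := by simp [shear]
  exact hshear ▸ (MulEquiv.prime_iff shear.toMulEquiv).mpr X_prime

theorem not_X_sub_X_dvd [Nontrivial R] {i j k l : σ} (hki : k ≠ i) (hkj : k ≠ j) (hkl : k ≠ l) :
    ¬ (X i - X j : MvPolynomial σ R) ∣ X k - X l := by
  classical
  rintro ⟨c, hc⟩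
  have := congrArg (eval (Pi.single k 1)) hc
  simp [hki.symm, hkj.symm, hkl.symm] at this

theorem isRelPrime_X_sub_X [IsDomain R] [LinearOrder σ] {i j k l : σ} (hij : i < j) (hkl : k < l)
    (hne : (i, j) ≠ (k, l)) : IsRelPrime (X i - X j : MvPolynomial σ R) (X k - X l) := by
  rw [(prime_X_sub_X hij.ne).irreducible.isRelPrime_iff_not_dvd]
  by_cases hki : k = i
  · subst hki
    have hlj : l ≠ j := fun hlj => hne (by rw [hlj])
    rw [← dvd_neg, neg_sub]
    exact not_X_sub_X_dvd hkl.ne' hlj hkl.ne'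
  by_cases hkj : k = j
  · subst hkj
    rw [← dvd_neg, neg_sub]
    exact not_X_sub_X_dvd (hij.trans hkl).ne' hkl.ne' hkl.ne'
  exact not_X_sub_X_dvd hki hkj hkl.ne

end MvPolynomial

section Triangular

variable {ι A : Type*} [Fintype ι] [CommRing A] {ℓ : ι → ℕ} {b : ι → ι → A}

theorem linearIndependent_of_triangular [NoZeroDivisors A]
    (htri : ∀ w v, v ≠ w → ℓ v ≤ ℓ w → b w v = 0) (hdiag : ∀ w, b w w ≠ 0) :
    LinearIndependent A b := by
  rw [Fintype.linearIndependent_iff]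
  intro g hg w
  induction hk : ℓ w using Nat.strong_induction_on generalizing w with
  | _ k ih =>
    have hsum : ∑ u, g u * b u w = g w * b w w := by
      refine Fintype.sum_eq_single w fun u hu => ?_
      rcases lt_or_ge (ℓ u) k with hlt | hle
      · rw [ih _ hlt u rfl, zero_mul]
      · rw [htri u w (Ne.symm hu) (hk ▸ hle), mul_zero]
    have hw : g w * b w w = 0 := by simpa [hsum] using congrFun hg w
    exact (mul_eq_zero.mp hw).resolve_right (hdiag w)

theorem le_span_of_triangular {N : Submodule A (ι → A)} (hmem : ∀ w, b w ∈ N)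
    (htri : ∀ w v, v ≠ w → ℓ v ≤ ℓ w → b w v = 0)
    (hdvd : ∀ p ∈ N, ∀ v, (∀ u, ℓ u < ℓ v → p u = 0) → b v v ∣ p v) :
    N ≤ Submodule.span A (Set.range b) := by
  classical
  intro p hp
  -- `s` grows by elements `a` of minimal `ℓ`; closed upwards, it contains the support of `b a`
  suffices key : ∀ s : Finset ι, (∀ x ∈ s, ∀ y, ℓ x < ℓ y → y ∈ s) →
      ∀ p ∈ N, (∀ u ∉ s, p u = 0) → p ∈ Submodule.span A (Set.range b) from
    key univ (by simp) p hp (by simp)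
  intro s
  induction s using Finset.induction_on_min_value ℓ with
  | empty =>
    intro _ p _ hp0
    rw [show p = 0 from funext fun u => hp0 u (notMem_empty u)]
    exact zero_mem _
  | insert a s _ hmin ih =>
    intro hup p hp hp0
    have hup' : ∀ x ∈ s, ∀ y, ℓ x < ℓ y → y ∈ s := fun x hx y hxy =>
      (mem_insert.mp (hup x (mem_insert_of_mem hx) y hxy)).resolve_left
        fun hya => absurd (hmin x hx) (hya ▸ hxy).not_ge
    have hbelow : ∀ u, ℓ u < ℓ a → p u = 0 := fun u hu =>
      hp0 u fun hus => (mem_insert.mp hus).elim (fun h => (h ▸ hu).false)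
        fun hs => (hmin u hs).not_gt hu
    obtain ⟨c, hc⟩ := hdvd p hp a hbelow
    have hrest : p - c • b a ∈ Submodule.span A (Set.range b) := by
      refine ih hup' _ (N.sub_mem hp (N.smul_mem c (hmem a))) fun u hus => ?_
      by_cases hua : u = a
      · subst hua
        simp [hc, mul_comm]
      have hbau : b a u = 0 := htri a u hua <| le_of_not_gt fun hau =>
        hus ((mem_insert.mp (hup a (mem_insert_self a s) u hau)).resolve_left hua)
      simp [hp0 u (by simp [hua, hus]), hbau]
    simpa using add_mem hrest (Submodule.smul_mem _ c (Submodule.subset_span ⟨a, rfl⟩))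

theorem exists_basis_of_triangular [NoZeroDivisors A] {N : Submodule A (ι → A)}
    (hmem : ∀ w, b w ∈ N) (htri : ∀ w v, v ≠ w → ℓ v ≤ ℓ w → b w v = 0) (hdiag : ∀ w, b w w ≠ 0)
    (hdvd : ∀ p ∈ N, ∀ v, (∀ u, ℓ u < ℓ v → p u = 0) → b v v ∣ p v) :
    ∃ B : Module.Basis ι A N, ∀ w, (B w : ι → A) = b w := by
  let b' : ι → N := fun w => ⟨b w, hmem w⟩
  have hli : LinearIndependent A b' :=
    .of_comp N.subtype (linearIndependent_of_triangular htri hdiag)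
  have hspan : ⊤ ≤ Submodule.span A (Set.range b') := by
    rintro p -
    obtain ⟨c, hc⟩ := (Submodule.mem_span_range_iff_exists_fun A).mp
      (le_span_of_triangular hmem htri hdvd p.2)
    exact (Submodule.mem_span_range_iff_exists_fun A).mpr
      ⟨c, Subtype.ext (by simpa [b'] using hc)⟩
  exact ⟨.mk hli hspan, fun w => by rw [Module.Basis.mk_apply]⟩

end Triangular

theorem bruhatLE.eq_or_len_lt {n : ℕ} {u v : Perm (Fin n)} (h : bruhatLE u v) :
    u = v ∨ len u < len v := by
  induction h with
  | refl => exact Or.inl rfl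
  | tail _ huv ih => exact Or.inr (ih.elim (· ▸ huv.2) (·.trans huv.2))

namespace IsCanonical

variable {n : ℕ} {w : Perm (Fin n)} {p : Perm (Fin n) → Pol n}

theorem apply_eq_zero (hp : IsCanonical w p) {v : Perm (Fin n)} (hvw : v ≠ w)
    (hlen : len v ≤ len w) : p v = 0 :=
  hp.2.2.1 v fun hwv => (hwv.eq_or_len_lt).elim (fun h => hvw h.symm) hlen.not_gt

theorem apply_self_ne_zero (hp : IsCanonical w p) : p w ≠ 0 := by
  rw [hp.2.2.2, prod_ne_zero_iff]
  exact fun q hq => sub_ne_zero_of_ne (X_injective.ne (mem_filter.mp hq).2.1.ne)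

end IsCanonical

theorem GKM.prod_dvd_apply {n : ℕ} {p : Perm (Fin n) → Pol n} (hp : GKM n p) {v : Perm (Fin n)}
    (hv : ∀ u, len u < len v → p u = 0) :
    (∏ q ∈ Finset.univ.filter
      (fun q : Fin n × Fin n => q.1 < q.2 ∧ len (Equiv.swap q.1 q.2 * v) < len v),
      (X q.1 - X q.2 : Pol n)) ∣ p v := by
  refine prod_dvd_of_isRelPrime (fun q hq q' hq' hne => ?_) fun q hq => ?_
  · exact isRelPrime_X_sub_X (mem_filter.mp hq).2.1 (mem_filter.mp hq').2.1 hne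
  · obtain ⟨-, hlt, hlen⟩ := mem_filter.mp hq
    simpa [hv _ hlen] using hp v q.1 q.2 hlt

theorem canonical_classes_form_basis_general (n : ℕ)
    (pw : Perm (Fin n) → Perm (Fin n) → Pol n)
    (hpw : ∀ w, IsCanonical w (pw w)) :
    Module.Free (Pol n) (gkmSubmodule n) ∧
    ∃ b : Module.Basis (Perm (Fin n)) (Pol n) (gkmSubmodule n),
      ∀ w, (b w : Perm (Fin n) → Pol n) = pw w := by
  obtain ⟨b, hb⟩ := exists_basis_of_triangular (N := gkmSubmodule n) (ℓ := len)
    (fun w => (hpw w).1) (fun w _ => (hpw w).apply_eq_zero)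
    (fun w => (hpw w).apply_self_ne_zero)
    (fun p hp v hv => (hpw v).2.2.2 ▸ GKM.prod_dvd_apply hp hv)
  exact ⟨.of_basis b, b, hb⟩

/-- `R` is a free `ℂ[t₁,…,tₙ]`-module and the canonical classes
`{p_w : w ∈ Sₙ}` form a `ℂ[t₁,…,tₙ]`-module basis of `R`. -/
theorem canonical_classes_form_basis (n : ℕ) (hn : 1 ≤ n)
    (pw : Perm (Fin n) → Perm (Fin n) → Pol n)
    (hpw : ∀ w, IsCanonical w (pw w)) :
    Module.Free (Pol n) (gkmSubmodule n) ∧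
    ∃ b : Module.Basis (Perm (Fin n)) (Pol n) (gkmSubmodule n),
      ∀ w, (b w : Perm (Fin n) → Pol n) = pw w :=
  canonical_classes_form_basis_general n pw hpw
end
end

section
/- For every i with 1 ≤ i ≤ n−1 and every p ∈ R: for each v ∈ S_n the polynomial p(v) − s_i(p(s_i v)) is divisible by t_i − t_{i+1}, the tuple δ_i p whose v-th component is the quotient (p(v) − s_i(p(s_i v)))/(t_i − t_{i+1}) again lies in R, and δ_i : R → R is a ℂ-linear map. -/
open MvPolynomial Equiv Finset

noncomputable section

namespace DDtest

variable {n : ℕ}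

/-- substitution sending `X b ↦ X a`, all other variables fixed -/
noncomputable def psiS (a b : Fin n) : Pol n →ₐ[ℂ] Pol n :=
  aeval (fun k => if k = b then X a else X k)

lemma psiS_X (a b k : Fin n) : psiS a b (X k) = if k = b then X a else X k := by
  simp [psiS]

lemma dvd_sub_psiS (a b : Fin n) (g : Pol n) :
    (X a - X b : Pol n) ∣ (g - psiS a b g) := by
  induction g using MvPolynomial.induction_on with
  | C c => simp [psiS]
  | add p q hp hq =>
      have h := dvd_add hp hq
      have he : p + q - psiS a b (p + q) = (p - psiS a b p) + (q - psiS a b q) := by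
        rw [map_add]; ring
      rw [he]; exact h
  | mul_X p k hp =>
      have h1 : p * X k - psiS a b (p * X k)
          = (p - psiS a b p) * X k + psiS a b p * (X k - psiS a b (X k)) := by
        rw [map_mul]; ring
      rw [h1]
      refine dvd_add (hp.mul_right _) (Dvd.dvd.mul_left ?_ _)
      rw [psiS_X]
      rcases eq_or_ne k b with rfl | hk
      · rw [if_pos rfl]; exact ⟨-1, by ring⟩
      · rw [if_neg hk, sub_self]; exact dvd_zero _

lemma dvd_of_psiS_eq_zero {a b : Fin n} {g : Pol n} (h : psiS a b g = 0) :
    (X a - X b : Pol n) ∣ g := by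
  have hh := dvd_sub_psiS a b g
  rwa [h, sub_zero] at hh

lemma psiS_self_sub (a b : Fin n) : psiS a b (X a - X b : Pol n) = 0 := by
  simp [psiS]

lemma psiS_eq_zero_of_dvd {a b : Fin n} {g : Pol n}
    (h : (X a - X b : Pol n) ∣ g) : psiS a b g = 0 := by
  obtain ⟨r, rfl⟩ := h
  rw [map_mul, psiS_self_sub, zero_mul]

lemma psiS_rename_swap (a b : Fin n) (g : Pol n) :
    psiS a b (rename ⇑(Equiv.swap a b) g) = psiS a b g := by
  rw [psiS, aeval_rename]
  have : ((fun k => if k = b then (X a : Pol n) else X k) ∘ ⇑(Equiv.swap a b))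
      = (fun k => if k = b then (X a : Pol n) else X k) := by
    funext k
    rcases eq_or_ne k a with rfl | hka
    · by_cases h : k = b
      · subst h; simp
      · simp [Function.comp, Equiv.swap_apply_left, h]
    · rcases eq_or_ne k b with rfl | hkb
      · simp [Function.comp, Equiv.swap_apply_right, hka.symm]
      · simp [Function.comp, Equiv.swap_apply_of_ne_of_ne hka hkb, hkb]
  rw [this]

lemma dvd_sub_rename_swap (a b : Fin n) (g : Pol n) :
    (X a - X b : Pol n) ∣ (g - rename ⇑(Equiv.swap a b) g) :=
  dvd_of_psiS_eq_zero (by rw [map_sub, psiS_rename_swap, sub_self])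

lemma XsubX_ne_zero {a b : Fin n} (hab : a ≠ b) : (X a - X b : Pol n) ≠ 0 :=
  sub_ne_zero.mpr fun h => hab (X_injective h)

end DDtest

namespace DDtest

open scoped Classical in
noncomputable def ddq (a b : Fin n) (p : Perm (Fin n) → Pol n) (v : Perm (Fin n)) : Pol n :=
  if h : (X a - X b : Pol n) ∣
      (p v - rename ⇑(Equiv.swap a b) (p (Equiv.swap a b * v)))
  then h.choose else 0

lemma dd_dvd {a b : Fin n} (hab : a < b) {p} (hp : GKM n p) (v : Perm (Fin n)) :
    (X a - X b : Pol n) ∣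
      (p v - rename ⇑(Equiv.swap a b) (p (Equiv.swap a b * v))) := by
  have h1 := hp v a b hab
  have h2 := dvd_sub_rename_swap a b (p (Equiv.swap a b * v))
  have h := dvd_add h1 h2
  rwa [sub_add_sub_cancel] at h

lemma dd_spec {a b : Fin n} (hab : a < b) {p} (hp : GKM n p) (v : Perm (Fin n)) :
    p v - rename ⇑(Equiv.swap a b) (p (Equiv.swap a b * v))
      = (X a - X b : Pol n) * ddq a b p v := by
  have h := dd_dvd hab hp v
  rw [ddq, dif_pos h]
  exact h.choose_spec

lemma gkm_add {p q} (hp : GKM n p) (hq : GKM n q) : GKM n (p + q) := by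
  intro v x y h
  have hh := dvd_add (hp v x y h) (hq v x y h)
  simpa [Pi.add_apply, add_sub_add_comm] using hh

lemma gkm_smul (c : ℂ) {p} (hp : GKM n p) : GKM n (c • p) := by
  intro v x y h
  have h1 := (hp v x y h).mul_left (C c)
  simpa [Pi.smul_apply, smul_eq_C_mul, mul_sub] using h1

lemma dd_gkm {a b : Fin n} (hab : a < b) {p} (hp : GKM n p) : GKM n (ddq a b p) := by
  intro v c e hce
  by_cases hsame : c = a ∧ e = b
  · obtain ⟨rfl, rfl⟩ := hsame
    -- now the pair (c, e) coincides with (a, b); everything is stated with c, e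
    obtain ⟨C0, hC⟩ := hp v c e hce
    obtain ⟨E, hE⟩ := dvd_sub_rename_swap c e C0
    have key2 : (X c - X e : Pol n) * (ddq c e p v - ddq c e p (Equiv.swap c e * v))
        = (X c - X e) * ((X c - X e) * E) := by
      rw [mul_sub, ← dd_spec hce hp v, ← dd_spec hce hp (Equiv.swap c e * v),
          Equiv.swap_mul_self_mul]
      have h1 : (p v - rename ⇑(Equiv.swap c e) (p (Equiv.swap c e * v)))
          - (p (Equiv.swap c e * v) - rename ⇑(Equiv.swap c e) (p v))
          = (p v - p (Equiv.swap c e * v))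
            + rename ⇑(Equiv.swap c e) (p v - p (Equiv.swap c e * v)) := by
        rw [map_sub]; ring
      rw [h1, hC, map_mul, map_sub, rename_X, rename_X, Equiv.swap_apply_left,
          Equiv.swap_apply_right]
      have h2 : rename ⇑(Equiv.swap c e) C0 = C0 - (X c - X e) * E := by
        rw [← hE]; ring
      rw [h2]; ring
    have hcan := mul_left_cancel₀ (XsubX_ne_zero hce.ne) key2
    exact ⟨E, hcan⟩
  · have key : (X a - X b : Pol n)
        * (ddq a b p v - ddq a b p (Equiv.swap c e * v))
        = (p v - p (Equiv.swap c e * v))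
          - rename ⇑(Equiv.swap a b)
              (p (Equiv.swap a b * v) - p (Equiv.swap a b * (Equiv.swap c e * v))) := by
      rw [mul_sub, ← dd_spec hab hp v, ← dd_spec hab hp (Equiv.swap c e * v), map_sub]
      ring
    have hsuv : Equiv.swap a b * (Equiv.swap c e * v)
        = Equiv.swap (Equiv.swap a b c) (Equiv.swap a b e) * (Equiv.swap a b * v) := by
      rw [Equiv.swap_apply_apply]; group
    have hdvd2 : (X c - X e : Pol n) ∣
        rename ⇑(Equiv.swap a b)
          (p (Equiv.swap a b * v) - p (Equiv.swap a b * (Equiv.swap c e * v))) := by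
      have hne : Equiv.swap a b c ≠ Equiv.swap a b e :=
        (Equiv.injective _).ne hce.ne
      rcases hne.lt_or_gt with h' | h'
      · have h1 := hp (Equiv.swap a b * v) (Equiv.swap a b c) (Equiv.swap a b e) h'
        rw [← hsuv] at h1
        have h2 := _root_.map_dvd (rename ⇑(Equiv.swap a b) : Pol n →ₐ[ℂ] Pol n) h1
        have h3 : (rename ⇑(Equiv.swap a b))
            ((X (Equiv.swap a b c) - X (Equiv.swap a b e) : Pol n))
            = (X c - X e : Pol n) := by
          rw [map_sub, rename_X, rename_X, Equiv.swap_apply_self, Equiv.swap_apply_self]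
        rwa [h3] at h2
      · have h1 := hp (Equiv.swap a b * v) (Equiv.swap a b e) (Equiv.swap a b c) h'
        rw [show Equiv.swap (Equiv.swap a b e) (Equiv.swap a b c)
              = Equiv.swap (Equiv.swap a b c) (Equiv.swap a b e) from
            Equiv.swap_comm _ _, ← hsuv] at h1
        have h2 := _root_.map_dvd (rename ⇑(Equiv.swap a b) : Pol n →ₐ[ℂ] Pol n) h1
        have h3 : (rename ⇑(Equiv.swap a b))
            ((X (Equiv.swap a b e) - X (Equiv.swap a b c) : Pol n))
            = -(X c - X e : Pol n) := by
          rw [map_sub, rename_X, rename_X, Equiv.swap_apply_self, Equiv.swap_apply_self]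
          ring
        rw [h3] at h2
        exact neg_dvd.mp h2
    have hDE : (X c - X e : Pol n) ∣
        (X a - X b : Pol n) * (ddq a b p v - ddq a b p (Equiv.swap c e * v)) := by
      rw [key]
      exact dvd_sub (hp v c e hce) hdvd2
    have hφ := psiS_eq_zero_of_dvd hDE
    rw [map_mul] at hφ
    have hφd : psiS c e (X a - X b : Pol n) ≠ 0 := by
      rw [map_sub, psiS_X, psiS_X]
      split_ifs with h1 h2 h2
      · exact absurd (h1.trans h2.symm) hab.ne
      · refine XsubX_ne_zero (ne_of_lt ?_)
        rw [← h1] at hce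
        exact hce.trans hab
      · exact XsubX_ne_zero fun h => hsame ⟨h.symm, h2.symm⟩
      · exact XsubX_ne_zero hab.ne
    have hφq := (mul_eq_zero.mp hφ).resolve_left hφd
    exact dvd_of_psiS_eq_zero hφq

lemma dd_add {a b : Fin n} (hab : a < b) {p q} (hp : GKM n p) (hq : GKM n q) :
    ddq a b (p + q) = ddq a b p + ddq a b q := by
  funext v
  have key : (X a - X b : Pol n) * ddq a b (p + q) v
      = (X a - X b) * (ddq a b p v + ddq a b q v) := by
    rw [← dd_spec hab (gkm_add hp hq) v, mul_add, ← dd_spec hab hp v, ← dd_spec hab hq v]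
    simp only [Pi.add_apply, map_add]
    ring
  exact mul_left_cancel₀ (XsubX_ne_zero hab.ne) key

lemma dd_smul {a b : Fin n} (hab : a < b) (c : ℂ) {p} (hp : GKM n p) :
    ddq a b (c • p) = c • ddq a b p := by
  funext v
  have key : (X a - X b : Pol n) * ddq a b (c • p) v
      = (X a - X b) * (c • ddq a b p v) := by
    rw [← dd_spec hab (gkm_smul c hp) v, mul_smul_comm, ← dd_spec hab hp v]
    simp only [Pi.smul_apply, map_smul, smul_sub]
  exact mul_left_cancel₀ (XsubX_ne_zero hab.ne) key

end DDtest

/-- for each `i`, each component `p(v) − sᵢ(p(sᵢv))` of `p − sᵢ·p` is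
divisible by `tᵢ − tᵢ₊₁`; the componentwise quotient `δᵢ p` again lies in `R`; and
`δᵢ : R → R` is `ℂ`-linear. -/
theorem dot_divided_difference_well_defined (n : ℕ) (hn : 1 ≤ n)
    (i : ℕ) (hi : i + 1 < n) :
    ∃ δ : (Perm (Fin n) → Pol n) → (Perm (Fin n) → Pol n),
      (∀ p, GKM n p → ∀ v,
        p v - pact (sT n i hi) (p (sT n i hi * v))
          = (X ⟨i, by omega⟩ - X ⟨i + 1, hi⟩ : Pol n) * δ p v) ∧
      (∀ p, GKM n p → GKM n (δ p)) ∧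
      (∀ p q, GKM n p → GKM n q → δ (p + q) = δ p + δ q) ∧
      (∀ (c : ℂ) (p), GKM n p → δ (c • p) = c • δ p) := by
  refine ⟨DDtest.ddq ⟨i, by omega⟩ ⟨i + 1, hi⟩, ?_, ?_, ?_, ?_⟩
  · intro p hp v
    exact DDtest.dd_spec (by simp [Fin.mk_lt_mk]) hp v
  · intro p hp
    exact DDtest.dd_gkm (by simp [Fin.mk_lt_mk]) hp
  · intro p q hp hq
    exact DDtest.dd_add (by simp [Fin.mk_lt_mk]) hp hq
  · intro c p hp
    exact DDtest.dd_smul (by simp [Fin.mk_lt_mk]) c hp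
end
end

section
/- Let s_i = (i,i+1) be a simple transposition and let p_{s_i} be its canonical class. For every transposition (j k) with 1 ≤ j < k ≤ n: if j ≤ i and i+1 ≤ k then p_{s_i}((j k)) = t_j − t_k, and otherwise p_{s_i}((j k)) = 0. Consequently, for every w ∈ S_n, w(p_{s_i}((j k))) = t_{w(j)} − t_{w(k)} whenever j ≤ i < i+1 ≤ k. -/
/-!
The class `q(v) = ∑_{m ≤ i} (t_m − t_{v(m)})` is a GKM class of degree one which agrees with
`p_{sᵢ}` on the identity and on every simple transposition, so `d = p_{sᵢ} − q` is a degree-one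
GKM class vanishing on all permutations of length at most one. If `v` has two inversions
`(x, y)`, then `d(v (x y)) = 0` by induction along a potential that increases whenever an
inversion is undone, and the GKM condition makes `d(v)` divisible by `t_{v(x)} − t_{v(y)}` for
two different pairs `{v(x), v(y)}`; a polynomial of degree at most one with two such factors is
zero. Hence `p_{sᵢ} = q`, and the values at transpositions are read off from `q`.
-/

open MvPolynomial Equiv Finset

noncomputable section

namespace MvPolynomial

variable {σ R : Type*} [CommRing R]

theorem X_sub_X_dvd_X_swap_sub_X [DecidableEq σ] (a b c : σ) :
    (X a - X b : MvPolynomial σ R) ∣ X (swap a b c) - X c := by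
  rw [swap_apply_def]
  split_ifs with hca hcb
  · exact ⟨-1, by rw [hca]; ring⟩
  · rw [hcb]
  · rw [sub_self]; exact dvd_zero _

variable [IsDomain R]

theorem exists_eq_C_mul_of_X_sub_X_dvd {f : MvPolynomial σ R} (hf : f.totalDegree ≤ 1)
    {a b : σ} (hab : a ≠ b) (h : X a - X b ∣ f) : ∃ k, f = C k * (X a - X b) := by
  obtain ⟨g, rfl⟩ := h
  rcases eq_or_ne g 0 with rfl | hg
  · exact ⟨0, by simp⟩
  have hXX : (X a - X b : MvPolynomial σ R) ≠ 0 := sub_ne_zero.2 (X_injective.ne hab)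
  have hdeg : (X a - X b : MvPolynomial σ R).totalDegree = 1 :=
    ((isHomogeneous_X R a).sub (isHomogeneous_X R b)).totalDegree hXX
  rw [totalDegree_mul_of_isDomain hXX hg, hdeg] at hf
  exact ⟨coeff 0 g, by rw [mul_comm, ← totalDegree_eq_zero_iff_eq_C.1 (by omega)]⟩

theorem eq_zero_of_X_sub_X_dvd_of_X_sub_X_dvd {f : MvPolynomial σ R} (hf : f.totalDegree ≤ 1)
    {a b c d : σ} (hab : a ≠ b) (hne : s(a, b) ≠ s(c, d))
    (h₁ : X a - X b ∣ f) (h₂ : X c - X d ∣ f) : f = 0 := by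
  classical
  obtain ⟨k, rfl⟩ := exists_eq_C_mul_of_X_sub_X_dvd hf hab h₁
  -- Renaming `d` to `c` kills `X c - X d` but not `X a - X b`.
  set ρ : σ → σ := Function.update id d c
  have hρ : ρ a ≠ ρ b := by
    simp only [ρ, Function.update_apply, id]
    split_ifs <;> grind [Sym2.eq_iff]
  have hρ₂ : rename ρ (C k * (X a - X b)) = 0 := by
    obtain ⟨g, hg⟩ := h₂
    rw [hg, map_mul, map_sub, rename_X, rename_X]
    simp [ρ, Function.update_apply]
  rw [map_mul, rename_C, map_sub, rename_X, rename_X, mul_eq_zero] at hρ₂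
  rcases hρ₂ with h | h
  · rw [h, zero_mul]
  · exact absurd (X_injective (sub_eq_zero.1 h)) hρ

end MvPolynomial

section Permutations

variable {n : ℕ}

def inversions (v : Perm (Fin n)) : Finset (Fin n × Fin n) :=
  univ.filter fun q => q.1 < q.2 ∧ v q.2 < v q.1

theorem len_eq_card_inversions (v : Perm (Fin n)) : len v = #(inversions v) := rfl

theorem mem_inversions {v : Perm (Fin n)} {x y : Fin n} :
    (x, y) ∈ inversions v ↔ x < y ∧ v y < v x := by
  simp [inversions]

theorem lt_of_notMem_inversions {v : Perm (Fin n)} {x y : Fin n} (hxy : x < y)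
    (h : (x, y) ∉ inversions v) : v x < v y :=
  lt_of_le_of_ne (not_lt.1 fun hlt => h (mem_inversions.2 ⟨hxy, hlt⟩)) (v.injective.ne hxy.ne)

theorem len_eq_zero_iff {v : Perm (Fin n)} : len v = 0 ↔ v = 1 := by
  refine ⟨fun h => ?_, fun h => ?_⟩
  · have hmono : StrictMono v := fun x y hxy =>
      lt_of_notMem_inversions hxy (by rw [len_eq_card_inversions, card_eq_zero] at h; simp [h])
    exact Equiv.ext (congrFun hmono.eq_id)
  · subst h
    rw [len_eq_card_inversions, card_eq_zero, inversions, filter_eq_empty_iff]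
    exact fun _ _ h => lt_asymm h.1 h.2

theorem swap_lt_swap_of_adjacent {a b x y : Fin n} (hab : (b : ℕ) = a + 1) (hxy : x < y)
    (hne : (x, y) ≠ (a, b)) : swap a b x < swap a b y := by
  simp only [ne_eq, Prod.mk.injEq] at hne
  simp only [swap_apply_def]
  split_ifs <;> simp only [Fin.ext_iff, Fin.lt_def] at * <;> omega

theorem swap_eq_swap_iff_of_lt {a b x y : Fin n} (hab : a < b) (hxy : x < y) :
    swap x y = swap a b ↔ x = a ∧ y = b := by
  refine ⟨fun h => ?_, fun ⟨hx, hy⟩ => hx ▸ hy ▸ rfl⟩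
  have hx := congr($h x)
  have hy := congr($h y)
  simp only [swap_apply_left, swap_apply_right, swap_apply_def] at hx hy
  split_ifs at hx hy <;> simp only [Fin.ext_iff, Fin.lt_def] at * <;> omega

theorem inversions_swap_of_adjacent {a b : Fin n} (hab : (b : ℕ) = a + 1) :
    inversions (swap a b) = {(a, b)} := by
  ext ⟨x, y⟩
  rw [mem_inversions, mem_singleton]
  refine ⟨fun ⟨hxy, hlt⟩ => ?_, fun h => ?_⟩
  · by_contra hne
    exact (swap_lt_swap_of_adjacent hab hxy hne).asymm hlt
  · obtain ⟨rfl, rfl⟩ := Prod.mk.inj h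
    simp [Fin.lt_def, hab]

theorem len_swap_of_adjacent {a b : Fin n} (hab : (b : ℕ) = a + 1) : len (swap a b) = 1 := by
  rw [len_eq_card_inversions, inversions_swap_of_adjacent hab, card_singleton]

theorem exists_adjacent_of_len_eq_one {v : Perm (Fin n)} (h : len v = 1) :
    ∃ a b : Fin n, (b : ℕ) = a + 1 ∧ v = swap a b := by
  obtain ⟨⟨a, b⟩, hv⟩ := card_eq_one.1 (len_eq_card_inversions v ▸ h)
  have hinv : ∀ {x y}, (x, y) ∈ inversions v ↔ x = a ∧ y = b := by
    intro x y; rw [hv, mem_singleton, Prod.mk.injEq]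
  obtain ⟨hab, hvab⟩ := mem_inversions.1 (hinv.2 ⟨rfl, rfl⟩)
  have hadj : (b : ℕ) = a + 1 := by
    by_contra hne
    -- The element between `a` and `b` would form a second inversion with one of them.
    set c : Fin n := ⟨a + 1, by omega⟩
    have hac : a < c := by simp [Fin.lt_def, c]
    have hcb : c < b := by simp only [Fin.lt_def, c] at hab ⊢; omega
    rcases lt_or_gt_of_ne (v.injective.ne hac.ne') with hc | hc
    · exact hcb.ne (hinv.1 (mem_inversions.2 ⟨hac, hc⟩)).2
    · exact hac.ne' (hinv.1 (mem_inversions.2 ⟨hcb, hvab.trans hc⟩)).1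
  refine ⟨a, b, hadj, ?_⟩
  have hlen : len (v * swap a b) = 0 := by
    rw [len_eq_card_inversions, card_eq_zero, eq_empty_iff_forall_notMem]
    rintro ⟨x, y⟩ hmem
    obtain ⟨hxy, hlt⟩ := mem_inversions.1 hmem
    rw [Perm.mul_apply, Perm.mul_apply] at hlt
    by_cases hxyab : (x, y) = (a, b)
    · obtain ⟨rfl, rfl⟩ := Prod.mk.inj hxyab
      rw [swap_apply_left, swap_apply_right] at hlt
      exact hlt.asymm hvab
    · refine hlt.asymm (lt_of_notMem_inversions (swap_lt_swap_of_adjacent hadj hxy hxyab) ?_)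
      intro hswapped
      obtain ⟨hxa, hyb⟩ := hinv.1 hswapped
      rw [swap_apply_eq_iff, swap_apply_left] at hxa
      rw [swap_apply_eq_iff, swap_apply_right] at hyb
      exact hxy.asymm (hxa ▸ hyb ▸ hab)
  rwa [len_eq_zero_iff, mul_eq_one_iff_eq_inv, swap_inv] at hlen

theorem eq_or_len_lt_of_bruhatLE {u v : Perm (Fin n)} (h : bruhatLE u v) :
    u = v ∨ len u < len v := by
  induction h with
  | refl => exact Or.inl rfl
  | tail _ hstep ih => exact Or.inr (ih.elim (· ▸ hstep.2) (·.trans hstep.2))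

-- Undoing an inversion changes only two terms of this sum, whereas its effect on `len` needs a
-- case analysis; this makes it the simpler induction measure.
def pairing (v : Perm (Fin n)) : ℕ := ∑ m : Fin n, (m : ℕ) * (v m : ℕ)

theorem pairing_lt_pairing_mul_swap {v : Perm (Fin n)} {x y : Fin n} (hxy : x < y)
    (hv : v y < v x) : pairing v < pairing (v * swap x y) := by
  have hsplit : ∀ w : Perm (Fin n), pairing w =
      x * w x + (y * w y + ∑ m ∈ (univ.erase x).erase y, (m : ℕ) * w m) := fun w => by
    rw [pairing, ← add_sum_erase _ _ (mem_univ x),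
      ← add_sum_erase _ _ (mem_erase.2 ⟨hxy.ne', mem_univ y⟩)]
  have hrest : ∑ m ∈ (univ.erase x).erase y, (m : ℕ) * (v * swap x y) m =
      ∑ m ∈ (univ.erase x).erase y, (m : ℕ) * v m := by
    refine sum_congr rfl fun m hm => ?_
    obtain ⟨hmy, hmx⟩ : m ≠ y ∧ m ≠ x := by simpa using hm
    rw [Perm.mul_apply, swap_apply_of_ne_of_ne hmx hmy]
  rw [hsplit, hsplit, hrest, Perm.mul_apply, Perm.mul_apply, swap_apply_left, swap_apply_right]
  have hxy' : (x : ℕ) < y := hxy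
  have hv' : (v y : ℕ) < v x := hv
  nlinarith

end Permutations

theorem GKM.eq_zero_of_totalDegree_le_one {n : ℕ} {d : Perm (Fin n) → Pol n} (hd : GKM n d)
    (hdeg : ∀ v, (d v).totalDegree ≤ 1) (hbase : ∀ v, len v ≤ 1 → d v = 0) : d = 0 := by
  funext v
  induction v using (Finite.wellFounded_of_trans_of_irrefl (InvImage (· > ·) pairing)).induction
    with | h v ih => ?_
  by_cases hv : len v ≤ 1
  · exact hbase v hv
  have hdvd : ∀ {x y}, (x, y) ∈ inversions v → (X (v y) - X (v x) : Pol n) ∣ d v := by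
    intro x y hmem
    obtain ⟨hxy, hvxy⟩ := mem_inversions.1 hmem
    have h := hd v (v y) (v x) hvxy
    rwa [swap_comm, ← mul_swap_eq_swap_mul, ih _ (pairing_lt_pairing_mul_swap hxy hvxy),
      Pi.zero_apply, sub_zero] at h
  obtain ⟨⟨x₁, y₁⟩, hq₁, ⟨x₂, y₂⟩, hq₂, hne⟩ :=
    one_lt_card.1 (len_eq_card_inversions v ▸ not_le.1 hv)
  have hlt₁ := (mem_inversions.1 hq₁).1
  have hlt₂ := (mem_inversions.1 hq₂).1
  refine MvPolynomial.eq_zero_of_X_sub_X_dvd_of_X_sub_X_dvd (hdeg v) (v.injective.ne hlt₁.ne')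
    ?_ (hdvd hq₁) (hdvd hq₂)
  rw [Ne, Sym2.eq_iff, v.injective.eq_iff, v.injective.eq_iff, v.injective.eq_iff,
    v.injective.eq_iff]
  rintro (⟨rfl, rfl⟩ | ⟨rfl, rfl⟩)
  · exact hne rfl
  · exact hlt₁.asymm hlt₂

section SimpleClass

variable {n : ℕ}

def simpleClassFormula (i : ℕ) (v : Perm (Fin n)) : Pol n :=
  ∑ m ∈ univ.filter (fun m : Fin n => (m : ℕ) ≤ i), (X m - X (v m))

theorem simpleClassFormula_gkm (i : ℕ) : GKM n (simpleClassFormula i) := by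
  intro v a b _
  have hdiff : simpleClassFormula i v - simpleClassFormula i (swap a b * v) =
      ∑ m ∈ univ.filter (fun m : Fin n => (m : ℕ) ≤ i), (X (swap a b (v m)) - X (v m)) := by
    rw [simpleClassFormula, simpleClassFormula, ← sum_sub_distrib]
    exact sum_congr rfl fun m _ => by rw [Perm.mul_apply]; ring
  rw [hdiff]
  exact dvd_sum fun m _ => X_sub_X_dvd_X_swap_sub_X a b (v m)

theorem simpleClassFormula_isHomogeneous (i : ℕ) (v : Perm (Fin n)) :
    (simpleClassFormula i v).IsHomogeneous 1 :=
  IsHomogeneous.sum _ _ _ fun _ _ => (isHomogeneous_X _ _).sub (isHomogeneous_X _ _)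

theorem simpleClassFormula_one (i : ℕ) : simpleClassFormula i (1 : Perm (Fin n)) = 0 :=
  sum_eq_zero fun _ _ => by rw [Perm.one_apply, sub_self]

theorem simpleClassFormula_swap (i : ℕ) {a b : Fin n} (hab : a < b) :
    simpleClassFormula i (swap a b) =
      if (a : ℕ) ≤ i ∧ i + 1 ≤ (b : ℕ) then X a - X b else 0 := by
  have hterm : ∀ m, (X m - X (swap a b m) : Pol n) =
      (if m = a then X a - X b else 0) + (if m = b then X b - X a else 0) := by
    intro m
    rw [swap_apply_def]
    split_ifs <;> simp_all [hab.ne]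
  simp only [simpleClassFormula, hterm, sum_add_distrib, sum_ite_eq', mem_filter, mem_univ,
    true_and]
  have hab' : (a : ℕ) < b := hab
  split_ifs <;> first | omega | ring

end SimpleClass

namespace IsCanonical

variable {n : ℕ} {a b : Fin n} {p : Perm (Fin n) → Pol n}

theorem apply_swap_of_adjacent (hp : IsCanonical (swap a b) p) (hab : (b : ℕ) = a + 1) :
    p (swap a b) = X a - X b := by
  have hlt : a < b := by simp [Fin.lt_def, hab]
  have hdescents : univ.filter (fun q : Fin n × Fin n =>
      q.1 < q.2 ∧ len (swap q.1 q.2 * swap a b) < len (swap a b)) = {(a, b)} := by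
    ext ⟨x, y⟩
    simp only [mem_filter, mem_univ, true_and, mem_singleton, Prod.mk.injEq,
      len_swap_of_adjacent hab, Nat.lt_one_iff, len_eq_zero_iff, mul_eq_one_iff_eq_inv, swap_inv]
    exact ⟨fun ⟨hxy, h⟩ => (swap_eq_swap_iff_of_lt hlt hxy).1 h,
      fun ⟨hx, hy⟩ => ⟨hx ▸ hy ▸ hlt, hx ▸ hy ▸ rfl⟩⟩
  rw [hp.2.2.2, hdescents, prod_singleton]

theorem apply_eq_zero_of_len_le_one (hp : IsCanonical (swap a b) p) (hab : (b : ℕ) = a + 1)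
    {v : Perm (Fin n)} (hv : len v ≤ 1) (hne : v ≠ swap a b) : p v = 0 :=
  hp.2.2.1 v fun h => (eq_or_len_lt_of_bruhatLE h).elim (fun h => hne h.symm) fun h => by
    rw [len_swap_of_adjacent hab] at h
    omega

theorem apply_eq_simpleClassFormula_of_len_le_one (hp : IsCanonical (swap a b) p)
    (hab : (b : ℕ) = a + 1) {v : Perm (Fin n)} (hv : len v ≤ 1) :
    p v = simpleClassFormula a v := by
  by_cases hva : v = swap a b
  · rw [hva, hp.apply_swap_of_adjacent hab, simpleClassFormula_swap _ (by simp [Fin.lt_def, hab]),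
      if_pos ⟨le_rfl, hab.ge⟩]
  rw [hp.apply_eq_zero_of_len_le_one hab hv hva]
  rcases Nat.le_one_iff_eq_zero_or_eq_one.1 hv with h | h
  · rw [len_eq_zero_iff.1 h, simpleClassFormula_one]
  · obtain ⟨c, d, hcd, rfl⟩ := exists_adjacent_of_len_eq_one h
    rw [simpleClassFormula_swap _ (by simp [Fin.lt_def, hcd]), if_neg]
    rintro ⟨hc, hd⟩
    exact hva (by rw [show c = a by ext; omega, show d = b by ext; omega])

theorem eq_simpleClassFormula (hp : IsCanonical (swap a b) p) (hab : (b : ℕ) = a + 1) :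
    p = simpleClassFormula a := by
  have hgkm : GKM n (p - simpleClassFormula a) :=
    (gkmSubmodule n).sub_mem hp.1 (simpleClassFormula_gkm (n := n) a)
  refine sub_eq_zero.1 (hgkm.eq_zero_of_totalDegree_le_one (fun v => ?_) fun v hv =>
    sub_eq_zero.2 (hp.apply_eq_simpleClassFormula_of_len_le_one hab hv))
  have hhom := hp.2.1 v
  rw [len_swap_of_adjacent hab] at hhom
  exact (hhom.sub (simpleClassFormula_isHomogeneous _ v)).totalDegree_le

end IsCanonical

theorem simple_class_localization_general (n : ℕ)
    (pw : Perm (Fin n) → Perm (Fin n) → Pol n)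
    (hpw : ∀ w, IsCanonical w (pw w))
    (i : ℕ) (hi : i + 1 < n) (j k : Fin n) (hjk : j < k) :
    ((j : ℕ) ≤ i ∧ i + 1 ≤ (k : ℕ) →
      pw (sT n i hi) (Equiv.swap j k) = (X j - X k : Pol n)) ∧
    (¬ ((j : ℕ) ≤ i ∧ i + 1 ≤ (k : ℕ)) → pw (sT n i hi) (Equiv.swap j k) = 0) ∧
    ((j : ℕ) ≤ i ∧ i + 1 ≤ (k : ℕ) → ∀ w : Perm (Fin n),
      pact w (pw (sT n i hi) (Equiv.swap j k)) = (X (w j) - X (w k) : Pol n)) := by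
  have hp : pw (sT n i hi) = simpleClassFormula i := (hpw (sT n i hi)).eq_simpleClassFormula rfl
  rw [hp, simpleClassFormula_swap i hjk]
  refine ⟨fun h => if_pos h, fun h => if_neg h, fun h w => ?_⟩
  rw [if_pos h, pact, map_sub, rename_X, rename_X]

/-- localizations of the canonical class of a simple transposition:
`p_{sᵢ}((j k)) = tⱼ − tₖ` when `j ≤ i < i+1 ≤ k`, and `p_{sᵢ}((j k)) = 0` otherwise;
consequently `w(p_{sᵢ}((j k))) = t_{w(j)} − t_{w(k)}` whenever `j ≤ i < i+1 ≤ k`. -/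
theorem simple_class_localization (n : ℕ) (hn : 1 ≤ n)
    (pw : Perm (Fin n) → Perm (Fin n) → Pol n)
    (hpw : ∀ w, IsCanonical w (pw w))
    (i : ℕ) (hi : i + 1 < n) (j k : Fin n) (hjk : j < k) :
    ((j : ℕ) ≤ i ∧ i + 1 ≤ (k : ℕ) →
      pw (sT n i hi) (Equiv.swap j k) = (X j - X k : Pol n)) ∧
    (¬ ((j : ℕ) ≤ i ∧ i + 1 ≤ (k : ℕ)) → pw (sT n i hi) (Equiv.swap j k) = 0) ∧
    ((j : ℕ) ≤ i ∧ i + 1 ≤ (k : ℕ) → ∀ w : Perm (Fin n),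
      pact w (pw (sT n i hi) (Equiv.swap j k)) = (X (w j) - X (w k) : Pol n)) :=
  simple_class_localization_general n pw hpw i hi j k hjk
end
end
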